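/- arXiv:1405.1824 — 5 statements merged into one kernel-verified Lean document; each statement's English description precedes it below -/
import Mathlib

section
/- For all 0 < r < r_0, the integral r^{-2} ∫_0^r s f(s^{-1}) ds is at most (a_2/(2-δ_2)) f(r^{-1}). -/
open MeasureTheory Real Set

theorem stmt0 (r0 a1 a2 d1 d2 : ℝ) (f : ℝ → ℝ)
    (hr0 : 0 < r0) (ha1 : 0 < a1) (ha2 : 0 < a2)
    (hd1 : d1 ∈ Set.Ioo (0:ℝ) 2) (hd2 : d2 ∈ Set.Ioo (0:ℝ) 2)
    (hf0 : ∀ s, 0 ≤ s → 0 ≤ f s)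
    (hmono : ∀ s t, 0 ≤ s → s ≤ t → f s ≤ f t)
    (hscale : ∀ s t, 1 ≤ s → 1/r0 ≤ t →
      a1 * s ^ d1 * f t ≤ f (s * t) ∧ f (s * t) ≤ a2 * s ^ d2 * f t) :
    ∀ r : ℝ, 0 < r → r < r0 →
      r ^ (-2 : ℝ) * (∫ s in (0:ℝ)..r, s * f s⁻¹) ≤ a2 / (2 - d2) * f r⁻¹ := by
  intro r hr hrr0
  obtain ⟨hd2a, hd2b⟩ := hd2
  have hrpos : (0:ℝ) < r⁻¹ := by positivity
  have hfr : 0 ≤ f r⁻¹ := hf0 _ hrpos.le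
  have h2d2 : (0:ℝ) < 2 - d2 := by linarith
  have hrinv : 1/r0 ≤ r⁻¹ := by
    rw [one_div]
    gcongr
  set C := a2 * r ^ d2 * f r⁻¹ with hC
  have hCnn : 0 ≤ C := by positivity
  -- pointwise bound on Icc 0 r
  have hb : ∀ s ∈ Set.Icc (0:ℝ) r, s * f s⁻¹ ≤ C * s ^ (1 - d2) := by
    intro s hs
    rcases eq_or_lt_of_le hs.1 with h0 | hspos
    · rw [← h0]
      simp only [zero_mul]
      exact mul_nonneg hCnn (Real.rpow_nonneg le_rfl _)
    · have hs1 : 1 ≤ r / s := (one_le_div hspos).2 hs.2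
      have := (hscale (r / s) r⁻¹ hs1 hrinv).2
      have heq : r / s * r⁻¹ = s⁻¹ := by
        field_simp
      rw [heq] at this
      calc s * f s⁻¹ ≤ s * (a2 * (r / s) ^ d2 * f r⁻¹) := by
            exact mul_le_mul_of_nonneg_left this hspos.le
        _ = C * s ^ (1 - d2) := by
            rw [Real.div_rpow hr.le hspos.le, Real.rpow_sub hspos, Real.rpow_one, hC]
            field_simp
  have hInt2 : IntervalIntegrable (fun s : ℝ => C * s ^ (1 - d2)) volume 0 r :=
    (intervalIntegral.intervalIntegrable_rpow' (by linarith)).const_mul C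
  have hval : (∫ s in (0:ℝ)..r, C * s ^ (1 - d2)) = C * (r ^ (2 - d2) / (2 - d2)) := by
    rw [intervalIntegral.integral_const_mul, integral_rpow (Or.inl (by linarith))]
    rw [Real.zero_rpow (by linarith)]
    ring_nf
  have key : r ^ (-2:ℝ) * (r ^ d2 * r ^ (2 - d2)) = 1 := by
    rw [← Real.rpow_add hr, ← Real.rpow_add hr]
    norm_num
  by_cases hI : IntervalIntegrable (fun s : ℝ => s * f s⁻¹) volume 0 r
  · have hmon := intervalIntegral.integral_mono_on hr.le hI hInt2 hb
    rw [hval] at hmon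
    calc r ^ (-2:ℝ) * (∫ s in (0:ℝ)..r, s * f s⁻¹)
        ≤ r ^ (-2:ℝ) * (C * (r ^ (2 - d2) / (2 - d2))) := by
          exact mul_le_mul_of_nonneg_left hmon (by positivity)
      _ = a2 * f r⁻¹ / (2 - d2) * (r ^ (-2:ℝ) * (r ^ d2 * r ^ (2 - d2))) := by
          rw [hC]; ring
      _ = a2 / (2 - d2) * f r⁻¹ := by rw [key]; ring
  · rw [intervalIntegral.integral_undef hI, mul_zero]
    positivity
end

section
/- If δ_2 < 1, then for all 0 < r < r_0, the integral r^{-1} ∫_0^r f(s^{-1}) ds is at most (a_2/(1-δ_2)) f(r^{-1}). -/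
open MeasureTheory Real Set

theorem stmt2 (r0 a1 a2 d1 d2 : ℝ) (f : ℝ → ℝ)
    (hr0 : 0 < r0) (ha1 : 0 < a1) (ha2 : 0 < a2)
    (hd1 : d1 ∈ Set.Ioo (0:ℝ) 2) (hd2 : d2 ∈ Set.Ioo (0:ℝ) 2)
    (hd2' : d2 < 1)
    (hf0 : ∀ s, 0 ≤ s → 0 ≤ f s)
    (hmono : ∀ s t, 0 ≤ s → s ≤ t → f s ≤ f t)
    (hscale : ∀ s t, 1 ≤ s → 1/r0 ≤ t →
      a1 * s ^ d1 * f t ≤ f (s * t) ∧ f (s * t) ≤ a2 * s ^ d2 * f t) :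
    ∀ r : ℝ, 0 < r → r < r0 →
      r⁻¹ * (∫ s in (0:ℝ)..r, f s⁻¹) ≤ a2 / (1 - d2) * f r⁻¹ := by
  intro r hr hrr0
  have hd2pos : 0 < d2 := hd2.1
  have h1d2 : 0 < 1 - d2 := by linarith
  have hrinv : (0:ℝ) < r⁻¹ := inv_pos.mpr hr
  have hfr : 0 ≤ f r⁻¹ := hf0 _ hrinv.le
  set g : ℝ → ℝ := fun s => a2 * f r⁻¹ * r ^ d2 * s ^ (-d2) with hg
  -- pointwise bound on Ioc 0 r
  have hbound : ∀ s ∈ Set.Ioc (0:ℝ) r, f s⁻¹ ≤ g s := by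
    intro s hs
    have hs0 : 0 < s := hs.1
    have hsr : s ≤ r := hs.2
    have h1 : 1 ≤ r / s := (one_le_div hs0).mpr hsr
    have h2 : 1 / r0 ≤ r⁻¹ := by
      rw [one_div]
      exact inv_anti₀ hr hrr0.le
    have := (hscale (r / s) r⁻¹ h1 h2).2
    have heq : r / s * r⁻¹ = s⁻¹ := by field_simp
    rw [heq] at this
    calc f s⁻¹ ≤ a2 * (r / s) ^ d2 * f r⁻¹ := this
      _ = g s := by
          simp only [hg]
          rw [div_rpow hr.le hs0.le, rpow_neg hs0.le, div_eq_mul_inv]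
          ring
  have hgnonneg : ∀ s ∈ Set.Ioc (0:ℝ) r, 0 ≤ g s := by
    intro s hs
    have : (0:ℝ) ≤ s ^ (-d2) := rpow_nonneg hs.1.le _
    positivity
  -- integrability of g on interval
  have hgint : IntervalIntegrable g volume 0 r := by
    apply IntervalIntegrable.const_mul
    exact intervalIntegral.intervalIntegrable_rpow' (by linarith)
  -- integrability of f ∘ inv
  have hanti : AntitoneOn (fun s => f s⁻¹) (Set.Ioc (0:ℝ) r) := by
    intro x hx y hy hxy
    exact hmono y⁻¹ x⁻¹ (inv_pos.mpr hy.1).le (inv_anti₀ hx.1 hxy)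
  have hfmeas : AEMeasurable (fun s => f s⁻¹) (volume.restrict (Set.Ioc (0:ℝ) r)) :=
    aemeasurable_restrict_of_antitoneOn measurableSet_Ioc hanti
  have hfint : IntervalIntegrable (fun s => f s⁻¹) volume 0 r := by
    rw [intervalIntegrable_iff_integrableOn_Ioc_of_le hr.le]
    apply Integrable.mono' (g := g)
    · rw [intervalIntegrable_iff_integrableOn_Ioc_of_le hr.le] at hgint
      exact hgint
    · exact hfmeas.aestronglyMeasurable
    · filter_upwards [ae_restrict_mem measurableSet_Ioc] with s hs
      rw [Real.norm_eq_abs, abs_of_nonneg (hf0 _ (inv_pos.mpr hs.1).le)]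
      exact hbound s hs
  -- comparison of integrals
  have hle : (∫ s in (0:ℝ)..r, f s⁻¹) ≤ ∫ s in (0:ℝ)..r, g s := by
    rw [intervalIntegral.integral_of_le hr.le, intervalIntegral.integral_of_le hr.le]
    apply setIntegral_mono_on
    · rw [intervalIntegrable_iff_integrableOn_Ioc_of_le hr.le] at hfint; exact hfint
    · rw [intervalIntegrable_iff_integrableOn_Ioc_of_le hr.le] at hgint; exact hgint
    · exact measurableSet_Ioc
    · exact hbound
  -- compute integral of g
  have hgval : (∫ s in (0:ℝ)..r, g s) = a2 * f r⁻¹ * r / (1 - d2) := by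
    rw [hg]
    rw [intervalIntegral.integral_const_mul]
    rw [integral_rpow (Or.inl (by linarith : (-1:ℝ) < -d2))]
    have : (-d2 + 1) = 1 - d2 := by ring
    rw [this]
    rw [Real.zero_rpow (by linarith : (1:ℝ) - d2 ≠ 0)]
    have hr' : r ^ d2 * (r ^ (1 - d2)) = r := by
      rw [← rpow_add hr]; norm_num
    rw [sub_zero]
    have : a2 * f r⁻¹ * r ^ d2 * (r ^ (1 - d2) / (1 - d2))
        = a2 * f r⁻¹ * (r ^ d2 * r ^ (1 - d2)) / (1 - d2) := by ring
    rw [this, hr']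
  rw [hgval] at hle
  calc r⁻¹ * (∫ s in (0:ℝ)..r, f s⁻¹) ≤ r⁻¹ * (a2 * f r⁻¹ * r / (1 - d2)) := by
        apply mul_le_mul_of_nonneg_left hle hrinv.le
    _ = a2 / (1 - d2) * f r⁻¹ := by field_simp
end

section
/- Let β(t) = ((1-t^2)_+)^2 and b_{z,r}(x) = β(|x-z|/r). Then for all x, y, z ∈ ℝ^d and r > 0 with |y-x| < r, the second-order Taylor remainder satisfies |b_{z,r}(y) − b_{z,r}(x) − ∇b_{z,r}(x)·(y-x)| ≤ 12 d |y-x|^2 / r^2. -/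
open MeasureTheory Real Set Metric

noncomputable def bumpFn (d : ℕ) (z : EuclideanSpace ℝ (Fin d)) (r : ℝ)
    (x : EuclideanSpace ℝ (Fin d)) : ℝ :=
  (max (1 - (dist x z / r) ^ 2) 0) ^ 2

/-!
With m(a) = (1 - ‖a‖²)₊ and ψ(a) = m(a) • a, the bump has gradient ∇b(x) = -(4/r) • ψ((x - z)/r).
The map ψ is 3-Lipschitz (write ψ a - ψ b = m(a) • (a - b) + (m(a) - m(b)) • b with ‖b‖ ≤ ‖a‖),
so ∇b is (12/r²)-Lipschitz, and the mean value inequality for b - ⟪∇b x, ·⟫ on the segment [x, y]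
bounds the remainder by 12‖y - x‖²/r².
-/

open InnerProductSpace

lemma hasDerivAt_max_zero_sq (t : ℝ) : HasDerivAt (fun s : ℝ => max s 0 ^ 2) (2 * max t 0) t := by
  rcases lt_trichotomy t 0 with ht | rfl | ht
  · have h : (fun s : ℝ => max s 0 ^ 2) =ᶠ[nhds t] fun _ => 0 := by
      filter_upwards [Iio_mem_nhds ht] with s hs
      simp [max_eq_right (le_of_lt (mem_Iio.1 hs))]
    simpa [max_eq_right ht.le] using (hasDerivAt_const t (0 : ℝ)).congr_of_eventuallyEq h
  · have hneg : HasDerivWithinAt (fun s : ℝ => max s 0 ^ 2) 0 (Iic 0) 0 :=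
      (hasDerivWithinAt_const 0 _ (0 : ℝ)).congr
        (fun s hs => by simp [max_eq_right (mem_Iic.1 hs)]) (by simp)
    have hpos : HasDerivWithinAt (fun s : ℝ => max s 0 ^ 2) 0 (Ici 0) 0 := by
      simpa using (hasDerivAt_pow 2 (0 : ℝ)).hasDerivWithinAt.congr
        (fun s hs => by simp [max_eq_left (mem_Ici.1 hs)]) (by simp)
    simpa [Iic_union_Ici] using hneg.union hpos
  · have h : (fun s : ℝ => max s 0 ^ 2) =ᶠ[nhds t] fun s => s ^ 2 := by
      filter_upwards [Ioi_mem_nhds ht] with s hs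
      simp [max_eq_left (le_of_lt (mem_Ioi.1 hs))]
    simpa [max_eq_left ht.le] using (hasDerivAt_pow 2 t).congr_of_eventuallyEq h

lemma abs_max_one_sub_sq_sub_mul_le {s t : ℝ} (ht : 0 ≤ t) (hts : t ≤ s) :
    |max (1 - s ^ 2) 0 - max (1 - t ^ 2) 0| * t ≤ 2 * (s - t) := by
  rcases le_total s 1 with hs1 | hs1
  · rw [max_eq_left (by nlinarith), max_eq_left (by nlinarith), abs_of_nonpos (by nlinarith)]
    have : (s + t) * t ≤ 2 := by nlinarith
    nlinarith [mul_le_mul_of_nonneg_left this (sub_nonneg.2 hts)]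
  rcases le_total t 1 with ht1 | ht1
  · rw [max_eq_right (by nlinarith), max_eq_left (by nlinarith), zero_sub, abs_neg,
      abs_of_nonneg (by nlinarith)]
    have : (1 + t) * t ≤ 2 := by nlinarith
    nlinarith [mul_le_mul_of_nonneg_left this (sub_nonneg.2 ht1)]
  · rw [max_eq_right (by nlinarith), max_eq_right (by nlinarith)]
    simp only [sub_self, abs_zero, zero_mul]
    linarith

section
variable {E : Type*} [NormedAddCommGroup E] [NormedSpace ℝ E]

lemma norm_max_one_sub_sq_smul_sub_le_of_norm_le {a b : E} (hba : ‖b‖ ≤ ‖a‖) :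
    ‖max (1 - ‖a‖ ^ 2) 0 • a - max (1 - ‖b‖ ^ 2) 0 • b‖ ≤ 3 * ‖a - b‖ := by
  set ma := max (1 - ‖a‖ ^ 2) 0
  set mb := max (1 - ‖b‖ ^ 2) 0
  have hma : ma ≤ 1 := max_le (by linarith [sq_nonneg ‖a‖]) zero_le_one
  calc ‖ma • a - mb • b‖ = ‖ma • (a - b) + (ma - mb) • b‖ := by
        rw [smul_sub, sub_smul]; abel_nf
    _ ≤ ma * ‖a - b‖ + |ma - mb| * ‖b‖ := by
        grw [norm_add_le, norm_smul, norm_smul, Real.norm_of_nonneg (le_max_right _ _),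
          Real.norm_eq_abs]
    _ ≤ 1 * ‖a - b‖ + 2 * (‖a‖ - ‖b‖) :=
        add_le_add (mul_le_mul_of_nonneg_right hma (norm_nonneg _))
          (abs_max_one_sub_sq_sub_mul_le (norm_nonneg b) hba)
    _ ≤ 3 * ‖a - b‖ := by linarith [norm_sub_norm_le a b]

lemma lipschitzWith_max_one_sub_sq_smul :
    LipschitzWith 3 fun a : E => max (1 - ‖a‖ ^ 2) 0 • a := by
  refine LipschitzWith.of_dist_le_mul fun a b => ?_
  rw [dist_eq_norm, dist_eq_norm]
  rcases le_total ‖b‖ ‖a‖ with h | h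
  · exact norm_max_one_sub_sq_smul_sub_le_of_norm_le h
  · rw [norm_sub_rev, norm_sub_rev a]
    exact norm_max_one_sub_sq_smul_sub_le_of_norm_le h

end

lemma abs_sub_sub_inner_le_of_hasGradientAt {E : Type*} [NormedAddCommGroup E]
    [InnerProductSpace ℝ E] [CompleteSpace E] {f : E → ℝ} {g : E → E} {K : NNReal}
    (hf : ∀ w, HasGradientAt f (g w) w) (hg : LipschitzWith K g) (x y : E) :
    |f y - f x - inner ℝ (g x) (y - x)| ≤ K * ‖y - x‖ ^ 2 := by
  have hbound : ∀ w ∈ segment ℝ x y, ‖toDual ℝ E (g w) - toDual ℝ E (g x)‖ ≤ K * ‖y - x‖ := by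
    intro w hw
    have hwx : ‖w - x‖ ≤ ‖y - x‖ := by
      simpa [dist_eq_norm, norm_sub_rev y x] using segment_subset_closedBall_left x y hw
    rw [← map_sub, LinearIsometryEquiv.norm_map]
    exact (hg.norm_sub_le w x).trans (by gcongr)
  have := (convex_segment x y).norm_image_sub_le_of_norm_hasFDerivWithin_le'
    (fun w _ => (hf w).hasFDerivAt.hasFDerivWithinAt) hbound
    (left_mem_segment ℝ x y) (right_mem_segment ℝ x y)
  rw [toDual_apply_apply, Real.norm_eq_abs] at this
  linarith

lemma hasGradientAt_bumpFn (d : ℕ) (z : EuclideanSpace ℝ (Fin d)) (r : ℝ)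
    (x : EuclideanSpace ℝ (Fin d)) :
    HasGradientAt (bumpFn d z r)
      (-(4 / r) • (max (1 - ‖r⁻¹ • (x - z)‖ ^ 2) 0 • r⁻¹ • (x - z))) x := by
  have hbump : bumpFn d z r = fun w => max (1 - ‖r⁻¹ • (w - z)‖ ^ 2) 0 ^ 2 := by
    funext w
    simp [bumpFn, dist_eq_norm, norm_smul, div_eq_inv_mul, mul_pow]
  have hinner := (((hasFDerivAt_id x).sub_const z).const_smul r⁻¹).norm_sq.const_sub 1
  rw [hbump, hasGradientAt_iff_hasFDerivAt]
  refine ((hasDerivAt_max_zero_sq _).comp_hasFDerivAt x hinner).congr_fderiv ?_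
  ext w
  simp only [id_eq, Pi.smul_apply, map_smul, map_sub, ContinuousLinearMap.comp_smulₛₗ, map_inv₀,
    ringHom_apply, ContinuousLinearMap.comp_id, smul_neg, neg_apply, smul_apply, sub_apply,
    coe_innerSL_apply, smul_eq_mul, nsmul_eq_mul, Nat.cast_ofNat, neg_smul, map_neg,
    toDual_apply_apply, neg_inj]
  ring

lemma lipschitzWith_gradient_bumpFn (d : ℕ) (z : EuclideanSpace ℝ (Fin d)) (r : ℝ) :
    LipschitzWith (12 / ‖r‖₊ ^ 2) fun x : EuclideanSpace ℝ (Fin d) =>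
      -(4 / r) • (max (1 - ‖r⁻¹ • (x - z)‖ ^ 2) 0 • r⁻¹ • (x - z)) := by
  refine ((lipschitzWith_smul (-(4 / r))).comp (lipschitzWith_max_one_sub_sq_smul.comp
    ((lipschitzWith_smul r⁻¹).comp (LipschitzWith.id.vsub (LipschitzWith.const z))))).weaken
    (le_of_eq ?_)
  simp only [nnnorm_neg, nnnorm_div, nnnorm_inv, Real.nnnorm_ofNat]
  ring

theorem stmt6_general (d : ℕ) (hd : 1 ≤ d) (z : EuclideanSpace ℝ (Fin d)) (r : ℝ) :
    ∀ x y : EuclideanSpace ℝ (Fin d), dist y x < r →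
      |bumpFn d z r y - bumpFn d z r x -
          (inner ℝ (gradient (bumpFn d z r) x) (y - x) : ℝ)| ≤
        12 * d * (dist y x) ^ 2 / r ^ 2 := by
  intro x y _
  have hgrad := hasGradientAt_bumpFn d z r
  have hd' : (1 : ℝ) ≤ d := by exact_mod_cast hd
  rw [(hgrad x).gradient, dist_eq_norm]
  calc _ ≤ (12 / ‖r‖₊ ^ 2 : NNReal) * ‖y - x‖ ^ 2 :=
        abs_sub_sub_inner_le_of_hasGradientAt hgrad (lipschitzWith_gradient_bumpFn d z r) x y
    _ = 12 * 1 * ‖y - x‖ ^ 2 / r ^ 2 := by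
        simp only [NNReal.coe_div, NNReal.coe_pow, NNReal.coe_ofNat, coe_nnnorm, Real.norm_eq_abs,
          sq_abs]
        ring
    _ ≤ 12 * d * ‖y - x‖ ^ 2 / r ^ 2 := by gcongr

theorem stmt6 (d : ℕ) (hd : 1 ≤ d) (z : EuclideanSpace ℝ (Fin d)) (r : ℝ) (hr : 0 < r) :
    ∀ x y : EuclideanSpace ℝ (Fin d), dist y x < r →
      |bumpFn d z r y - bumpFn d z r x -
          (inner ℝ (gradient (bumpFn d z r) x) (y - x) : ℝ)| ≤
        12 * d * (dist y x) ^ 2 / r ^ 2 :=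
  stmt6_general d hd z r
end

section
/- For every t > 0, the running supremum ψ*(t) := sup_{s ≤ t} ψ(s) satisfies ψ*(t) ≤ π^2 ψ(t). -/
/-!
Taking `ξ = s e₀` gives `ψ s = ∫ (1 - cos (s x₀)) ρ ‖x‖ dx`. Since `1 - cos u ≤ min 2 (u² / 2)`,
which is nondecreasing in `|u|`, for `s ≤ t` it suffices to show that the kernel
`g v = π² (1 - cos v) - min 2 (v² / 2)` satisfies `∫ g (t x₀) ρ ‖x‖ dx ≥ 0`.

The primitive of `g` is nonnegative on `[0, ∞)`: `g ≥ 0` on `[0, π]` by Jordan's inequality, and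
beyond `π` the primitive is at least `π² (b - 1) - 2 b > 0`. On each line parallel to `e₀` the
weight `ρ ‖x‖` is even and nonincreasing in `|x₀|`; writing it as a superposition of indicators of
intervals `(0, b)` (layer cake) reduces the claim to the nonnegativity of the primitive.
-/

open MeasureTheory Real Set

lemma one_sub_cos_le_min_two_sq_div_two (v : ℝ) : 1 - cos v ≤ min 2 (v ^ 2 / 2) :=
  le_min (by linarith [neg_one_le_cos v]) (by linarith [one_sub_sq_div_two_le_cos (x := v)])

lemma min_two_sq_div_two_le (r u : ℝ) : min 2 ((r * u) ^ 2 / 2) ≤ (2 + r ^ 2) * min 1 (u ^ 2) := by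
  rcases le_total 1 (u ^ 2) with hu | hu
  · rw [min_eq_left hu]; nlinarith [min_le_left 2 ((r * u) ^ 2 / 2), sq_nonneg r]
  · rw [min_eq_right hu]
    nlinarith [min_le_right 2 ((r * u) ^ 2 / 2), sq_nonneg r, sq_nonneg u]

noncomputable def gapKernel (v : ℝ) : ℝ := π ^ 2 * (1 - cos v) - min 2 (v ^ 2 / 2)

lemma continuous_gapKernel : Continuous gapKernel := by
  unfold gapKernel; fun_prop

lemma gapKernel_even : gapKernel.Even := fun v => by
  simp [gapKernel]

lemma gapKernel_nonneg_of_abs_le_pi {v : ℝ} (hv : |v| ≤ π) : 0 ≤ gapKernel v := by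
  have hcos := cos_le_one_sub_mul_cos_sq hv
  have hπ : π ^ 2 * (2 / π ^ 2 * v ^ 2) = 2 * v ^ 2 := by field_simp
  unfold gapKernel
  nlinarith [min_le_right 2 (v ^ 2 / 2), sq_nonneg v, sq_nonneg π]

lemma intervalIntegral_gapKernel_nonneg {b : ℝ} (hb : 0 ≤ b) : 0 ≤ ∫ v in 0..b, gapKernel v := by
  rcases le_or_gt b π with hbπ | hπb
  · refine intervalIntegral.integral_nonneg hb fun v hv => gapKernel_nonneg_of_abs_le_pi ?_
    rw [abs_of_nonneg hv.1]; exact hv.2.trans hbπ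
  have hlower : ∫ v in 0..b, (π ^ 2 * (1 - cos v) - 2) = π ^ 2 * (b - sin b) - 2 * b := by
    rw [intervalIntegral.integral_sub (by apply Continuous.intervalIntegrable; fun_prop)
      intervalIntegrable_const, intervalIntegral.integral_const_mul, intervalIntegral.integral_sub
      intervalIntegrable_const (continuous_cos.intervalIntegrable _ _), integral_cos]
    simp [mul_comm]
  have hπsq : 9 ≤ π ^ 2 := by nlinarith [pi_gt_three]
  have hsin : b - 1 ≤ b - sin b := by linarith [sin_le_one b]
  calc 0 ≤ π ^ 2 * (b - sin b) - 2 * b := by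
        nlinarith [pi_gt_three, mul_le_mul hπsq hsin (by linarith [pi_gt_three]) (sq_nonneg π)]
    _ = ∫ v in 0..b, (π ^ 2 * (1 - cos v) - 2) := hlower.symm
    _ ≤ ∫ v in 0..b, gapKernel v :=
      intervalIntegral.integral_mono_on hb (by apply Continuous.intervalIntegrable; fun_prop)
        (continuous_gapKernel.intervalIntegrable _ _)
        fun v _ => by unfold gapKernel; linarith [min_le_left 2 (v ^ 2 / 2)]

lemma setIntegral_nonneg_of_Ioc_subset {f : ℝ → ℝ} (hprim : ∀ b, 0 ≤ b → 0 ≤ ∫ v in 0..b, f v)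
    {S : Set ℝ} (hS : S ⊆ Ioi 0) (hdown : ∀ y ∈ S, Ioc 0 y ⊆ S) : 0 ≤ ∫ y in S, f y := by
  by_cases hbdd : BddAbove S
  · rcases S.eq_empty_or_nonempty with rfl | hne
    · simp
    set b := sSup S
    have hb : 0 ≤ b := (hS hne.some_mem).le.trans (le_csSup hbdd hne.some_mem)
    have hIoo : Ioo 0 b ⊆ S := fun y hy => by
      obtain ⟨z, hz, hyz⟩ := exists_lt_of_lt_csSup hne hy.2
      exact hdown z hz ⟨hy.1, hyz.le⟩
    have hIoc : S ⊆ Ioc 0 b := fun y hy => ⟨hS hy, le_csSup hbdd hy⟩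
    have hae : S =ᵐ[volume] Ioc 0 b :=
      hIoc.eventuallyLE.antisymm (Ioo_ae_eq_Ioc.symm.le.trans hIoo.eventuallyLE)
    rw [setIntegral_congr_set hae, ← intervalIntegral.integral_of_le hb]
    exact hprim b hb
  · have hSeq : S = Ioi 0 := hS.antisymm fun y hy => by
      obtain ⟨z, hz, hyz⟩ := not_bddAbove_iff.1 hbdd y
      exact hdown z hz ⟨hy, hyz.le⟩
    subst hSeq
    by_cases hint : IntegrableOn f (Ioi 0)
    · exact ge_of_tendsto (intervalIntegral_tendsto_integral_Ioi 0 hint Filter.tendsto_id)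
        (Filter.eventually_atTop.2 ⟨0, hprim⟩)
    · exact (integral_undef hint).ge

lemma setIntegral_Ioi_indicator_Iio {a : ℝ} (ha : 0 ≤ a) (c : ℝ) :
    ∫ l in Ioi 0, (Iio a).indicator (fun _ => c) l = c * a := by
  rw [integral_indicator_const _ measurableSet_Iio, measureReal_restrict_apply measurableSet_Iio,
    Iio_inter_Ioi, Real.volume_real_Ioo_of_le ha, smul_eq_mul, sub_zero, mul_comm]

lemma setIntegral_mul_nonneg_of_antitoneOn {f q : ℝ → ℝ} (hf : Measurable f)
    (hprim : ∀ b, 0 ≤ b → 0 ≤ ∫ v in 0..b, f v) (hq : Measurable q)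
    (hq0 : ∀ y ∈ Ioi 0, 0 ≤ q y) (hqanti : AntitoneOn q (Ioi 0))
    (hint : IntegrableOn (fun y => f y * q y) (Ioi 0)) :
    0 ≤ ∫ y in Ioi 0, f y * q y := by
  set μ := volume.restrict (Ioi (0 : ℝ))
  -- layer cake: `f y * q y = ∫ l in Ioi 0, G y l`, and `G · l` is `f` cut off to a level set of `q`
  let G : ℝ → ℝ → ℝ := fun y => (Iio (q y)).indicator fun _ => f y
  have hGm : Measurable (Function.uncurry G) :=
    (hf.comp measurable_fst).indicator (measurableSet_lt measurable_snd (hq.comp measurable_fst))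
  have hGint : Integrable (Function.uncurry G) (μ.prod μ) := by
    refine (integrable_prod_iff hGm.aestronglyMeasurable).2 ⟨?_, ?_⟩
    · refine Filter.Eventually.of_forall fun y => ?_
      change Integrable (G y) μ
      refine (integrable_indicator_iff measurableSet_Iio).2 (integrableOn_const ?_)
      rw [Measure.restrict_apply measurableSet_Iio, Iio_inter_Ioi, Real.volume_Ioo]
      exact ENNReal.ofReal_ne_top
    · refine hint.norm.congr ((ae_restrict_iff' measurableSet_Ioi).2
        (Filter.Eventually.of_forall fun y hy => ?_))
      simp only [Function.uncurry_apply_pair, G, norm_indicator_eq_indicator_norm]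
      rw [setIntegral_Ioi_indicator_Iio (hq0 y hy), norm_mul, Real.norm_of_nonneg (hq0 y hy)]
  calc 0 ≤ ∫ l, ∫ y, G y l ∂μ ∂μ := by
        refine integral_nonneg fun l => ?_
        have hlevel : MeasurableSet {y | l < q y} := measurableSet_lt measurable_const hq
        change 0 ≤ ∫ y, {y | l < q y}.indicator f y ∂μ
        rw [integral_indicator hlevel, Measure.restrict_restrict hlevel]
        exact setIntegral_nonneg_of_Ioc_subset hprim inter_subset_right
          fun y hy z hz => ⟨hy.1.trans_le (hqanti hz.1 hy.2 hz.2), hz.1⟩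
    _ = ∫ y, ∫ l, G y l ∂μ ∂μ := (integral_integral_swap hGint).symm
    _ = ∫ y in Ioi 0, f y * q y := setIntegral_congr_fun measurableSet_Ioi fun y hy =>
        setIntegral_Ioi_indicator_Iio (hq0 y hy) (f y)

noncomputable def euclideanFinSuccEquiv (n : ℕ) :
    ℝ × (Fin n → ℝ) ≃ᵐ EuclideanSpace ℝ (Fin (n + 1)) :=
  (MeasurableEquiv.piFinSuccAbove (fun _ => ℝ) 0).symm.trans (MeasurableEquiv.toLp 2 _)

lemma measurePreserving_euclideanFinSuccEquiv (n : ℕ) :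
    MeasurePreserving (euclideanFinSuccEquiv n) :=
  (volume_preserving_piFinSuccAbove (fun _ => ℝ) 0).symm.trans
    (EuclideanSpace.volume_preserving_symm_measurableEquiv_toLp _).symm

@[simp]
lemma euclideanFinSuccEquiv_apply_zero {n : ℕ} (p : ℝ × (Fin n → ℝ)) :
    euclideanFinSuccEquiv n p 0 = p.1 := by
  simp [euclideanFinSuccEquiv]

lemma norm_euclideanFinSuccEquiv {n : ℕ} (p : ℝ × (Fin n → ℝ)) :
    ‖euclideanFinSuccEquiv n p‖ = √(p.1 ^ 2 + ∑ j, p.2 j ^ 2) := by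
  simp [euclideanFinSuccEquiv, EuclideanSpace.norm_eq, Fin.sum_univ_succ]

lemma integral_mul_nonneg_of_even {f q : ℝ → ℝ} (hf : Measurable f) (hfeven : f.Even)
    (hprim : ∀ b, 0 ≤ b → 0 ≤ ∫ v in 0..b, f v) (hq : Measurable q) (hqeven : q.Even)
    (hq0 : ∀ y ∈ Ioi 0, 0 ≤ q y) (hqanti : AntitoneOn q (Ioi 0))
    (hint : Integrable fun y => f y * q y) :
    0 ≤ ∫ y, f y * q y := by
  have habs : ∀ y, f |y| * q |y| = f y * q y := fun y => by
    rcases abs_choice y with h | h <;> rw [h]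
    rw [hfeven, hqeven]
  rw [← integral_congr_ae (ae_of_all _ habs), integral_comp_abs (f := fun y => f y * q y)]
  exact mul_nonneg zero_le_two
    (setIntegral_mul_nonneg_of_antitoneOn hf hprim hq hq0 hqanti hint.integrableOn)

lemma integral_mul_norm_nonneg {n : ℕ} {f ρ : ℝ → ℝ} (hf : Measurable f) (hfeven : f.Even)
    (hprim : ∀ b, 0 ≤ b → 0 ≤ ∫ v in 0..b, f v) (hρ : Measurable ρ)
    (hρ0 : ∀ r ∈ Ioi 0, 0 ≤ ρ r) (hρanti : AntitoneOn ρ (Ioi 0))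
    (hint : Integrable fun x : EuclideanSpace ℝ (Fin (n + 1)) => f (x 0) * ρ ‖x‖) :
    0 ≤ ∫ x : EuclideanSpace ℝ (Fin (n + 1)), f (x 0) * ρ ‖x‖ := by
  have hmp := measurePreserving_euclideanFinSuccEquiv n
  rw [← hmp.integrable_comp_emb (euclideanFinSuccEquiv n).measurableEmbedding] at hint
  rw [← hmp.integral_comp' (g := fun x => f (x 0) * ρ ‖x‖)]
  simp only [Function.comp_def, euclideanFinSuccEquiv_apply_zero, norm_euclideanFinSuccEquiv]
    at hint ⊢
  rw [Measure.volume_eq_prod] at hint ⊢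
  rw [integral_prod_symm _ hint]
  refine integral_nonneg_of_ae (hint.prod_left_ae.mono fun z hz => ?_)
  set c := ∑ j, z j ^ 2
  have hc : 0 ≤ c := by positivity
  refine integral_mul_nonneg_of_even hf hfeven hprim (q := fun a => ρ √(a ^ 2 + c))
    (by fun_prop) (fun a => by simp) (fun a ha => hρ0 _ ?_) ?_ hz
  · simp only [mem_Ioi, sqrt_pos]; nlinarith [mem_Ioi.1 ha]
  · intro a ha b hb hab
    refine hρanti (by simp only [mem_Ioi, sqrt_pos]; nlinarith [mem_Ioi.1 ha])
      (by simp only [mem_Ioi, sqrt_pos]; nlinarith [mem_Ioi.1 hb]) (sqrt_le_sqrt ?_)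
    nlinarith [mem_Ioi.1 ha]

section Comparison

variable {n : ℕ} {ρ : ℝ → ℝ}

lemma integrable_min_two_sq_div_two_mul (hρ : Measurable ρ) (hρ0 : ∀ r, 0 ≤ ρ r)
    (hlevy : Integrable fun x : EuclideanSpace ℝ (Fin (n + 1)) => min 1 (‖x‖ ^ 2) * ρ ‖x‖)
    (r : ℝ) : Integrable fun x : EuclideanSpace ℝ (Fin (n + 1)) =>
      min 2 ((r * x 0) ^ 2 / 2) * ρ ‖x‖ := by
  refine (hlevy.const_mul (2 + r ^ 2)).mono' (by fun_prop) (ae_of_all _ fun x => ?_)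
  have hx : (x 0) ^ 2 ≤ ‖x‖ ^ 2 := sq_le_sq.2 (by simpa using PiLp.norm_apply_le x 0)
  rw [norm_of_nonneg (mul_nonneg (le_min zero_le_two (by positivity)) (hρ0 _)), ← mul_assoc]
  refine mul_le_mul_of_nonneg_right ((min_two_sq_div_two_le r (x 0)).trans ?_) (hρ0 _)
  gcongr

lemma integrable_one_sub_cos_mul (hρ : Measurable ρ) (hρ0 : ∀ r, 0 ≤ ρ r)
    (hlevy : Integrable fun x : EuclideanSpace ℝ (Fin (n + 1)) => min 1 (‖x‖ ^ 2) * ρ ‖x‖)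
    (r : ℝ) : Integrable fun x : EuclideanSpace ℝ (Fin (n + 1)) =>
      (1 - cos (r * x 0)) * ρ ‖x‖ := by
  refine (integrable_min_two_sq_div_two_mul hρ hρ0 hlevy r).mono' (by fun_prop)
    (ae_of_all _ fun x => ?_)
  rw [norm_of_nonneg (mul_nonneg (by linarith [cos_le_one (r * x 0)]) (hρ0 _))]
  exact mul_le_mul_of_nonneg_right (one_sub_cos_le_min_two_sq_div_two _) (hρ0 _)

lemma integral_one_sub_cos_mul_le (hρ : Measurable ρ) (hρ0 : ∀ r, 0 ≤ ρ r)
    (hρanti : AntitoneOn ρ (Ioi 0))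
    (hlevy : Integrable fun x : EuclideanSpace ℝ (Fin (n + 1)) => min 1 (‖x‖ ^ 2) * ρ ‖x‖)
    {s t : ℝ} (hs : 0 ≤ s) (hst : s ≤ t) (ht : 0 < t) :
    ∫ x : EuclideanSpace ℝ (Fin (n + 1)), (1 - cos (s * x 0)) * ρ ‖x‖
      ≤ π ^ 2 * ∫ x : EuclideanSpace ℝ (Fin (n + 1)), (1 - cos (t * x 0)) * ρ ‖x‖ := by
  have hcos := integrable_one_sub_cos_mul hρ hρ0 hlevy
  have hmin := integrable_min_two_sq_div_two_mul hρ hρ0 hlevy t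
  have hgap_eq : ∫ x : EuclideanSpace ℝ (Fin (n + 1)), gapKernel (t * x 0) * ρ ‖x‖
      = π ^ 2 * (∫ x : EuclideanSpace ℝ (Fin (n + 1)), (1 - cos (t * x 0)) * ρ ‖x‖)
        - ∫ x : EuclideanSpace ℝ (Fin (n + 1)), min 2 ((t * x 0) ^ 2 / 2) * ρ ‖x‖ := by
    rw [← integral_const_mul, ← integral_sub ((hcos t).const_mul _) hmin]
    congr 1 with x
    rw [gapKernel]; ring
  have hgap : 0 ≤ ∫ x : EuclideanSpace ℝ (Fin (n + 1)), gapKernel (t * x 0) * ρ ‖x‖ := by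
    refine integral_mul_norm_nonneg (f := fun v => gapKernel (t * v))
      (continuous_gapKernel.comp (continuous_const_mul t)).measurable
      (fun v => by simp only [mul_neg]; exact gapKernel_even _) (fun b hb => ?_) hρ
      (fun r _ => hρ0 r) hρanti ?_
    · rw [intervalIntegral.integral_comp_mul_left _ ht.ne', mul_zero]
      exact smul_nonneg (inv_nonneg.2 ht.le) (intervalIntegral_gapKernel_nonneg (by positivity))
    · refine (((hcos t).const_mul (π ^ 2)).sub hmin).congr (ae_of_all _ fun x => ?_)
      simp only [Pi.sub_apply, gapKernel]; ring
  have hmono : ∫ x : EuclideanSpace ℝ (Fin (n + 1)), (1 - cos (s * x 0)) * ρ ‖x‖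
      ≤ ∫ x : EuclideanSpace ℝ (Fin (n + 1)), min 2 ((t * x 0) ^ 2 / 2) * ρ ‖x‖ := by
    refine integral_mono (hcos s) hmin fun x => mul_le_mul_of_nonneg_right ?_ (hρ0 _)
    refine (one_sub_cos_le_min_two_sq_div_two _).trans (min_le_min_left _ ?_)
    rw [mul_pow, mul_pow]
    gcongr
  linarith

end Comparison

lemma exists_measurable_nonneg_eqOn_Ioi_of_antitoneOn {ρ : ℝ → ℝ} (hρ0 : ∀ r ∈ Ioi 0, 0 ≤ ρ r)
    (hρanti : AntitoneOn ρ (Ioi 0)) :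
    ∃ ρ' : ℝ → ℝ, Measurable ρ' ∧ (∀ r, 0 ≤ ρ' r) ∧ EqOn ρ' ρ (Ioi 0) := by
  -- `ρ ∘ exp` is antitone on all of `ℝ`, hence measurable
  have hexp : Antitone (ρ ∘ exp) := fun u v huv =>
    hρanti (exp_pos u) (exp_pos v) (exp_le_exp.2 huv)
  refine ⟨fun r => max 0 (ρ (exp (log r))), measurable_const.max
    (hexp.measurable.comp measurable_log), fun r => le_max_left _ _, fun r hr => ?_⟩
  simp only [exp_log (mem_Ioi.1 hr), max_eq_right (hρ0 r hr)]

theorem stmt12 (d : ℕ) (hd : 1 ≤ d) (ψ : ℝ → ℝ) (ρ : ℝ → ℝ)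
    (hρ0 : ∀ t, 0 < t → 0 ≤ ρ t)
    (hρmono : ∀ s t, 0 < s → s ≤ t → ρ t ≤ ρ s)
    (hlevy : Integrable (fun x : EuclideanSpace ℝ (Fin d) => min 1 (‖x‖ ^ 2) * ρ ‖x‖))
    (hψ : ∀ ξ : EuclideanSpace ℝ (Fin d),
      ψ ‖ξ‖ = ∫ x : EuclideanSpace ℝ (Fin d),
        (1 - Real.cos (inner ℝ ξ x : ℝ)) * ρ ‖x‖) :
    ∀ t : ℝ, 0 < t → ∀ s : ℝ, 0 ≤ s → s ≤ t → ψ s ≤ Real.pi ^ 2 * ψ t := by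
  intro t ht s hs hst
  obtain ⟨n, rfl⟩ : ∃ n, d = n + 1 := ⟨d - 1, by omega⟩
  have hρanti : AntitoneOn ρ (Ioi 0) := fun a ha b _ hab => hρmono a b ha hab
  obtain ⟨ρ', hρ'm, hρ'0, hρ'eq⟩ :=
    exists_measurable_nonneg_eqOn_Ioi_of_antitoneOn (fun r hr => hρ0 r hr) hρanti
  have hae : ∀ᵐ x : EuclideanSpace ℝ (Fin (n + 1)), ρ ‖x‖ = ρ' ‖x‖ :=
    (Measure.ae_ne volume 0).mono fun x hx => (hρ'eq (norm_pos_iff.2 hx)).symm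
  have hψ' : ∀ r, 0 ≤ r → ψ r = ∫ x : EuclideanSpace ℝ (Fin (n + 1)),
      (1 - cos (r * x 0)) * ρ' ‖x‖ := fun r hr => by
    have := hψ (EuclideanSpace.single 0 r)
    rw [PiLp.norm_single, norm_of_nonneg hr] at this
    rw [this]
    exact integral_congr_ae (hae.mono fun x hx => by simp [hx, EuclideanSpace.inner_single_left])
  rw [hψ' s hs, hψ' t ht.le]
  exact integral_one_sub_cos_mul_le hρ'm hρ'0 (hρanti.congr hρ'eq.symm)
    (hlevy.congr (hae.mono fun x hx => by simp only [hx])) hs hst ht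
end

section
/- Let γ ∈ (0,1), let u : ℝ^d → ℝ satisfy Osc_{B(x_0, 2^{-j} s)} u ≤ (1-γ)^j for j = 0, …, k, and define v(x) = (1-γ)^{-k}(u(x) − a_k) with a_k = inf_{B(x_0, 2^{-k} s)} u + (1-γ)^k/2. Then for every x with 2^{-k+j} s ≤ |x − x_0| < 2^{-k+j+1} s (0 ≤ j ≤ k−1), one has v(x) ≤ (2|x−x_0|/(2^{-k}s))^{η} − 1/2, provided η ≥ −log_2(1−γ). -/
open MeasureTheory Real Set Metric

theorem stmt18 (d : ℕ) (hd : 1 ≤ d) (γ s : ℝ) (hγ : γ ∈ Set.Ioo (0:ℝ) 1) (hs : 0 < s)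
    (x0 : EuclideanSpace ℝ (Fin d)) (u : EuclideanSpace ℝ (Fin d) → ℝ) (k : ℕ)
    (hbdd : ∀ x, |u x| ≤ 1 / 2)
    (hosc : ∀ j : ℕ, j ≤ k → ∀ x ∈ Metric.ball x0 ((2:ℝ) ^ (-(j:ℝ)) * s),
      ∀ y ∈ Metric.ball x0 ((2:ℝ) ^ (-(j:ℝ)) * s), |u x - u y| ≤ (1 - γ) ^ j) :
    ∀ j : ℕ, j < k → ∀ x : EuclideanSpace ℝ (Fin d),
      (2:ℝ) ^ (-(k:ℝ) + j) * s ≤ dist x x0 → dist x x0 < (2:ℝ) ^ (-(k:ℝ) + j + 1) * s →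
      ∀ η : ℝ, -Real.logb 2 (1 - γ) ≤ η →
        ((1 - γ) ^ k)⁻¹ *
            (u x - (sInf (u '' Metric.ball x0 ((2:ℝ) ^ (-(k:ℝ)) * s)) + (1 - γ) ^ k / 2)) ≤
          (2 * dist x x0 / ((2:ℝ) ^ (-(k:ℝ)) * s)) ^ η - 1 / 2 := by
  obtain ⟨hγ0, hγ1⟩ := hγ
  intro j hj x hx1 hx2 η hη
  set b : ℝ := 1 - γ with hbdef
  have hb0 : 0 < b := by simp [hbdef]; linarith
  have hb1 : b < 1 := by simp [hbdef]; linarith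
  set r : ℝ := (2:ℝ) ^ (-(k:ℝ)) * s with hrdef
  have hr : 0 < r := by positivity
  set m : ℕ := k - (j + 1) with hmdef
  have hmk : m + (j + 1) = k := Nat.sub_add_cancel (by omega)
  have hmkR : (m : ℝ) = (k : ℝ) - ((j : ℝ) + 1) := by
    have := hmk
    push_cast [← this]
    ring
  -- x belongs to the ball of radius 2^{-m} s
  have hxball : x ∈ Metric.ball x0 ((2:ℝ) ^ (-(m:ℝ)) * s) := by
    rw [Metric.mem_ball]
    calc dist x x0 < (2:ℝ) ^ (-(k:ℝ) + j + 1) * s := hx2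
      _ = (2:ℝ) ^ (-(m:ℝ)) * s := by rw [hmkR]; ring_nf
  -- the small ball is inside the 2^{-m} s ball
  have hsub : Metric.ball x0 r ⊆ Metric.ball x0 ((2:ℝ) ^ (-(m:ℝ)) * s) := by
    apply Metric.ball_subset_ball
    apply mul_le_mul_of_nonneg_right _ hs.le
    apply Real.rpow_le_rpow_of_exponent_le one_le_two
    rw [hmkR]
    have : (0:ℝ) ≤ (j:ℝ) := Nat.cast_nonneg j
    linarith
  have hne : (u '' Metric.ball x0 r).Nonempty :=
    ⟨u x0, mem_image_of_mem u (mem_ball_self hr)⟩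
  have hlb : u x - b ^ m ≤ sInf (u '' Metric.ball x0 r) := by
    apply le_csInf hne
    rintro _ ⟨y, hy, rfl⟩
    have h := hosc m (by omega) x hxball y (hsub hy)
    have h' := (abs_le.mp h).2
    linarith
  -- Left side bound
  have hbk : (0:ℝ) < b ^ k := pow_pos hb0 k
  have hLHS : (b ^ k)⁻¹ * (u x - (sInf (u '' Metric.ball x0 r) + b ^ k / 2))
      ≤ (b ^ (j + 1))⁻¹ - 1 / 2 := by
    have key : b ^ k = b ^ m * b ^ (j + 1) := by rw [← pow_add, hmk]
    have h1 : (b ^ k)⁻¹ * (u x - (sInf (u '' Metric.ball x0 r) + b ^ k / 2))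
        ≤ (b ^ k)⁻¹ * (b ^ m - b ^ k / 2) := by
      apply mul_le_mul_of_nonneg_left _ (inv_nonneg.mpr hbk.le)
      linarith
    have h2 : (b ^ k)⁻¹ * (b ^ m - b ^ k / 2) = (b ^ (j + 1))⁻¹ - 1 / 2 := by
      have hm0 : (b:ℝ) ^ m ≠ 0 := (pow_pos hb0 m).ne'
      have hj0 : (b:ℝ) ^ (j+1) ≠ 0 := (pow_pos hb0 (j+1)).ne'
      rw [key]
      field_simp
    linarith
  -- Right side bound
  have hη0 : 0 ≤ η := by
    have : Real.logb 2 b < 0 := Real.logb_neg one_lt_two hb0 hb1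
    linarith
  have hbase : (2:ℝ) ^ ((j:ℝ) + 1) ≤ 2 * dist x x0 / r := by
    rw [le_div_iff₀ hr, hrdef]
    calc (2:ℝ) ^ ((j:ℝ) + 1) * ((2:ℝ) ^ (-(k:ℝ)) * s)
        = (2:ℝ) ^ ((j:ℝ) + 1 + -(k:ℝ)) * s := by
          rw [← mul_assoc, ← Real.rpow_add two_pos]
      _ = 2 * ((2:ℝ) ^ (-(k:ℝ) + (j:ℝ)) * s) := by
          rw [show ((j:ℝ) + 1 + -(k:ℝ)) = 1 + (-(k:ℝ) + (j:ℝ)) by ring,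
            Real.rpow_add two_pos, Real.rpow_one]
          ring
      _ ≤ 2 * dist x x0 := by nlinarith
  have hinv2 : b⁻¹ ≤ (2:ℝ) ^ η := by
    have h1 : (2:ℝ) ^ (-Real.logb 2 b) ≤ (2:ℝ) ^ η :=
      Real.rpow_le_rpow_of_exponent_le one_le_two hη
    have h2 : (2:ℝ) ^ (-Real.logb 2 b) = b⁻¹ := by
      rw [Real.rpow_neg (by norm_num), Real.rpow_logb two_pos (by norm_num) hb0]
    linarith [h1, h2.symm.le]
  have hRHS : (b ^ (j + 1))⁻¹ ≤ (2 * dist x x0 / r) ^ η := by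
    have step1 : (b ^ (j + 1))⁻¹ ≤ ((2:ℝ) ^ η) ^ (j + 1) := by
      rw [← inv_pow]
      exact pow_le_pow_left₀ (inv_nonneg.mpr hb0.le) hinv2 (j + 1)
    have step2 : ((2:ℝ) ^ η) ^ (j + 1) = ((2:ℝ) ^ ((j:ℝ) + 1)) ^ η := by
      rw [← Real.rpow_natCast ((2:ℝ) ^ η) (j+1), ← Real.rpow_mul (by norm_num),
        ← Real.rpow_mul (by norm_num)]
      push_cast
      ring_nf
    have step3 : ((2:ℝ) ^ ((j:ℝ) + 1)) ^ η ≤ (2 * dist x x0 / r) ^ η :=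
      Real.rpow_le_rpow (by positivity) hbase hη0
    calc (b ^ (j + 1))⁻¹ ≤ ((2:ℝ) ^ η) ^ (j + 1) := step1
      _ = ((2:ℝ) ^ ((j:ℝ) + 1)) ^ η := step2
      _ ≤ (2 * dist x x0 / r) ^ η := step3
  linarith
end
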